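/- arXiv:1105.0209 — 4 statements merged into one kernel-verified Lean document; each statement's English description precedes it below -/
import Mathlib

section
/- Let X be a paracompact Hausdorff topological space of covering dimension at most n, and let {U_α}_{α∈A} be an open cover of X. Then there exists an open cover {O_{iβ} : i ∈ {0,…,n}, β ∈ B_i} of X refining {U_α} (i.e., every O_{iβ} is contained in some U_α) such that for each fixed i and all β ≠ β' in B_i, the sets O_{iβ} and O_{iβ'} are disjoint. -/
/-- A topological space `X` has covering dimension at most `n` if every open cover of `X`
admits an open refinement in which every point of `X` belongs to at most `n + 1` members of
the refinement. -/
def CovDimLE (X : Type) [TopologicalSpace X] (n : ℕ) : Prop :=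
  ∀ (ι : Type) (U : ι → Set X), (∀ i, IsOpen (U i)) → (⋃ i, U i) = Set.univ →
    ∃ (κ : Type) (V : κ → Set X),
      (∀ j, IsOpen (V j)) ∧ (⋃ j, V j) = Set.univ ∧
      (∀ j, ∃ i, V j ⊆ U i) ∧
      ∀ x : X, ({j | x ∈ V j}).Finite ∧ ({j | x ∈ V j}).ncard ≤ n + 1

/-- Let `X` be a paracompact Hausdorff space of covering dimension at most `n` and let
`{U_α}_{α ∈ A}` be an open cover of `X`.  Then there is an open cover
`{O_{iβ} : i ∈ {0, …, n}, β ∈ B_i}` of `X` refining `{U_α}` such that, for each fixed `i`,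
the sets `O_{iβ}`, `β ∈ B_i`, are pairwise disjoint. -/
theorem subanalytic_triangulation_stmt0
    (X : Type) [TopologicalSpace X] [T2Space X] [ParacompactSpace X]
    (n : ℕ) (hdim : CovDimLE X n)
    (A : Type) (U : A → Set X) (hUopen : ∀ a, IsOpen (U a))
    (hUcover : (⋃ a, U a) = Set.univ) :
    ∃ (B : Fin (n + 1) → Type) (O : ∀ i, B i → Set X),
      (∀ i β, IsOpen (O i β)) ∧
      (⋃ i, ⋃ β, O i β) = Set.univ ∧
      (∀ i β, ∃ a, O i β ⊆ U a) ∧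
      (∀ i, ∀ β β' : B i, β ≠ β' → O i β ∩ O i β' = ∅) := by
  classical
  obtain ⟨κ, V, hVopen, hVcov, hVref, hVfin⟩ := hdim A U hUopen hUcover
  obtain ⟨f, hf⟩ := PartitionOfUnity.exists_isSubordinate (s := (Set.univ : Set X))
    isClosed_univ V hVopen (hVcov ▸ subset_rfl)
  have hsupp : ∀ (j : κ) (x : X), f j x ≠ 0 → x ∈ V j := fun j x h =>
    hf j (subset_closure h)
  refine ⟨fun i => {S : Finset κ // S.card = i.1 + 1},
    fun i S => {x | ∀ j ∈ S.1, 0 < f j x ∧ ∀ k ∉ S.1, f k x < f j x}, ?_, ?_, ?_, ?_⟩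
  · -- openness
    intro i S
    rw [isOpen_iff_mem_nhds]
    intro x hx
    obtain ⟨N, hN, hNfin⟩ := f.locallyFinite x
    have key : N ∩ ⋂ j ∈ S.1, ({y | 0 < f j y} ∩
        ⋂ k ∈ hNfin.toFinset \ S.1, {y | f k y < f j y}) ∈ nhds x := by
      refine Filter.inter_mem hN ?_
      refine (Filter.biInter_finset_mem _).2 fun j hj => Filter.inter_mem ?_
        ((Filter.biInter_finset_mem _).2 fun k hk => ?_)
      · exact ((isOpen_lt continuous_const (f j).continuous)).mem_nhds (hx j hj).1
      · exact ((isOpen_lt (f k).continuous (f j).continuous)).mem_nhds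
          ((hx j hj).2 k (Finset.mem_sdiff.mp hk).2)
    refine Filter.mem_of_superset key ?_
    rintro y ⟨hyN, hy⟩
    simp only [Set.mem_iInter, Set.mem_inter_iff, Set.mem_setOf_eq] at hy ⊢
    intro j hj
    refine ⟨(hy j hj).1, fun k hk => ?_⟩
    by_cases h0 : f k y = 0
    · rw [h0]; exact (hy j hj).1
    · exact (hy j hj).2 k (Finset.mem_sdiff.mpr
        ⟨hNfin.mem_toFinset.mpr ⟨y, h0, hyN⟩, hk⟩)
  · -- covering
    rw [Set.eq_univ_iff_forall]
    intro x
    have hx1 : ({j | x ∈ V j}).Finite := (hVfin x).1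
    have hsub : {j | f j x ≠ 0} ⊆ {j | x ∈ V j} := fun j hj => hsupp j x hj
    have hP : ({j : κ | f j x ≠ 0}).Finite := hx1.subset hsub
    have hcard : ({j : κ | f j x ≠ 0}).ncard ≤ n + 1 :=
      le_trans (Set.ncard_le_ncard hsub hx1) (hVfin x).2
    have hPcard : hP.toFinset.card = ({j : κ | f j x ≠ 0}).ncard :=
      (Set.ncard_eq_toFinset_card _ hP).symm
    obtain ⟨j₀, hj₀⟩ := f.exists_pos (s := (Set.univ : Set X)) (Set.mem_univ x)
    have hPne : 1 ≤ hP.toFinset.card :=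
      Finset.card_pos.mpr ⟨j₀, hP.mem_toFinset.mpr hj₀.ne'⟩
    refine Set.mem_iUnion.mpr ⟨⟨hP.toFinset.card - 1, by omega⟩, Set.mem_iUnion.mpr
      ⟨⟨hP.toFinset, by simp; omega⟩, ?_⟩⟩
    intro j hj
    have hjx : 0 < f j x :=
      lt_of_le_of_ne (f.nonneg j x) (Ne.symm (hP.mem_toFinset.mp hj))
    refine ⟨hjx, fun k hk => ?_⟩
    have : f k x = 0 := by
      by_contra h
      exact hk (hP.mem_toFinset.mpr h)
    rw [this]; exact hjx
  · -- refinement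
    intro i S
    have : S.1.Nonempty := Finset.card_pos.mp (by rw [S.2]; omega)
    obtain ⟨j, hj⟩ := this
    obtain ⟨a, ha⟩ := hVref j
    exact ⟨a, fun x hx => ha (hsupp j x (hx j hj).1.ne')⟩
  · -- disjointness
    intro i S S' hne
    rw [Set.eq_empty_iff_forall_notMem]
    rintro x ⟨hxS, hxS'⟩
    have h1 : ¬ S.1 ⊆ S'.1 := fun h => hne (Subtype.ext
      (Finset.eq_of_subset_of_card_le h (by rw [S.2, S'.2])))
    have h2 : ¬ S'.1 ⊆ S.1 := fun h => hne (Subtype.ext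
      (Finset.eq_of_subset_of_card_le h (by rw [S.2, S'.2])).symm)
    obtain ⟨j, hjS, hjS'⟩ := Finset.not_subset.mp h1
    obtain ⟨j', hj'S', hj'S⟩ := Finset.not_subset.mp h2
    exact absurd ((hxS j hjS).2 j' hj'S) (not_lt.mpr ((hxS' j' hj'S').2 j hjS').le)
end

section
/- Let X be a paracompact Hausdorff topological space of covering dimension at most n, and let {U_α}_{α∈A} be an open cover of X with A countable. Then there exists an open cover {O_{iβ} : i ∈ {0,…,n}, β ∈ B_i} of X refining {U_α} such that each index set B_i is countable and, for each fixed i and all β ≠ β' in B_i, the sets O_{iβ} and O_{iβ'} are disjoint. -/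
open Set

/-- Key lemma: in a normal space, a countable locally finite open family of order at most
`n+1` admits, over any closed set it covers, a refinement split into `n+1` countable
families (indexed by `ℕ`), each consisting of pairwise disjoint open sets. -/
lemma covdim_decomp_key {X : Type} [TopologicalSpace X] [NormalSpace X] :
    ∀ (n : ℕ) (A : Type), Countable A → ∀ (G : A → Set X),
    (∀ a, IsOpen (G a)) → LocallyFinite G →
    (∀ x, {a | x ∈ G a}.ncard ≤ n + 1) →
    ∀ s : Set X, IsClosed s → s ⊆ ⋃ a, G a →
    ∃ O : Fin (n + 1) → ℕ → Set X,
      (∀ i k, IsOpen (O i k)) ∧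
      s ⊆ ⋃ i, ⋃ k, O i k ∧
      (∀ i k, O i k = ∅ ∨ ∃ a, O i k ⊆ G a) ∧
      (∀ i, ∀ k k' : ℕ, k ≠ k' → O i k ∩ O i k' = ∅) := by
  intro n
  induction n with
  | zero =>
    intro A hA G hGopen hGlf horder s _hs hsub
    haveI := hA
    obtain ⟨e⟩ := nonempty_embedding_nat A
    refine ⟨fun _ k => ⋃ a : {a : A // e a = k}, G a.1, ?_, ?_, ?_, ?_⟩
    · intro _ _; exact isOpen_iUnion fun a => hGopen a.1
    · intro x hx
      obtain ⟨a, ha⟩ : ∃ a, x ∈ G a := mem_iUnion.1 (hsub hx)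
      exact mem_iUnion.2 ⟨0, mem_iUnion.2 ⟨e a, mem_iUnion.2 ⟨⟨a, rfl⟩, ha⟩⟩⟩
    · intro _ k
      by_cases h : ∃ a, e a = k
      · obtain ⟨a0, ha0⟩ := h
        refine Or.inr ⟨a0, fun x hx => ?_⟩
        obtain ⟨⟨a, ha⟩, hxa⟩ := mem_iUnion.1 hx
        obtain rfl : a = a0 := e.injective (ha.trans ha0.symm)
        exact hxa
      · refine Or.inl (eq_empty_of_forall_notMem fun x hx => ?_)
        obtain ⟨⟨a, ha⟩, _⟩ := mem_iUnion.1 hx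
        exact h ⟨a, ha⟩
    · intro _ k k' hkk'
      refine eq_empty_of_forall_notMem fun x hx => ?_
      obtain ⟨⟨a, ha⟩, hxa⟩ := mem_iUnion.1 hx.1
      obtain ⟨⟨a', ha'⟩, hxa'⟩ := mem_iUnion.1 hx.2
      have hne : a ≠ a' := fun h => hkk' (by rw [← ha, ← ha', h])
      have h2 : ({a, a'} : Set A) ⊆ {b | x ∈ G b} := by
        rintro b (rfl | rfl) <;> assumption
      have h3 := Set.ncard_le_ncard h2 (hGlf.point_finite x)
      rw [Set.ncard_pair hne] at h3
      have h4 := horder x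
      omega
  | succ n IH =>
    intro A hA G hGopen hGlf horder s hs hsub
    haveI := hA
    haveI := Classical.decEq A
    -- shrink the cover over `s`
    obtain ⟨W, hsW, hWopen, hWcl⟩ := exists_subset_iUnion_closure_subset hs hGopen
      (fun x _ => hGlf.point_finite x) hsub
    have hWG : ∀ a, W a ⊆ G a := fun a => subset_closure.trans (hWcl a)
    have hclW_lf : LocallyFinite fun a => closure (W a) := (hGlf.subset hWG).closure
    set σ : X → Set A := fun x => {a | x ∈ closure (W a)} with hσdef
    have hσfin : ∀ x, (σ x).Finite := fun x => hclW_lf.point_finite x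
    -- the "high multiplicity" closed set
    set T : Set X := {x | n + 2 ≤ (σ x).ncard} with hTdef
    have hT : IsClosed T := by
      rw [← isOpen_compl_iff]
      rw [isOpen_iff_forall_mem_open]
      intro x hx
      obtain ⟨N, hN, hNfin⟩ := hclW_lf x
      have hF' : ({a | (closure (W a) ∩ N).Nonempty ∧ x ∉ closure (W a)}).Finite :=
        hNfin.subset fun a ha => ha.1
      refine ⟨interior N \ ⋃ a ∈ {a | (closure (W a) ∩ N).Nonempty ∧ x ∉ closure (W a)},
        closure (W a), ?_, ?_, ?_⟩
      · intro y hy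
        have hσsub : σ y ⊆ σ x := by
          intro a ha
          have hyN : y ∈ interior N := hy.1
          have hnonempty : (closure (W a) ∩ N).Nonempty :=
            ⟨y, ha, interior_subset hyN⟩
          by_contra hxa
          exact hy.2 (mem_biUnion ⟨hnonempty, hxa⟩ ha)
        intro hyT
        have := Set.ncard_le_ncard hσsub (hσfin x)
        simp only [hTdef, mem_compl_iff, mem_setOf_eq] at hyT hx
        omega
      · exact isOpen_interior.sdiff (hF'.isClosed_biUnion fun a _ => isClosed_closure)
      · constructor
        · exact mem_interior_iff_mem_nhds.2 hN
        · intro hmem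
          obtain ⟨a, ha, hxa⟩ := mem_iUnion₂.1 hmem
          exact ha.2 hxa
    -- top layer: intersections over (n+2)-element subsets
    set P : {S : Finset A // S.card = n + 2} → Set X := fun S => ⋂ a ∈ S.1, G a with hPdef
    have hPopen : ∀ S, IsOpen (P S) := fun S => isOpen_biInter_finset fun a _ => hGopen a
    have hPsubG : ∀ S, ∀ a ∈ S.1, P S ⊆ G a := by
      intro S a ha x hx
      exact mem_iInter₂.1 hx a ha
    have hPdisj : ∀ S S', S ≠ S' → P S ∩ P S' = ∅ := by
      intro S S' hne
      refine eq_empty_of_forall_notMem fun x hx => ?_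
      have hsub2 : ((S.1 ∪ S'.1 : Finset A) : Set A) ⊆ {a | x ∈ G a} := by
        intro a ha
        rcases Finset.mem_union.1 (by exact_mod_cast ha) with h | h
        · exact mem_iInter₂.1 hx.1 a h
        · exact mem_iInter₂.1 hx.2 a h
      have hcard : n + 3 ≤ (S.1 ∪ S'.1).card := by
        by_contra hlt
        push_neg at hlt
        have h1 : S.1 = S.1 ∪ S'.1 :=
          Finset.eq_of_subset_of_card_le Finset.subset_union_left (by omega)
        have h2 : S'.1 = S.1 ∪ S'.1 :=
          Finset.eq_of_subset_of_card_le Finset.subset_union_right (by omega)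
        exact hne (Subtype.ext (h1.trans h2.symm))
      have h5 := Set.ncard_le_ncard hsub2 (hGlf.point_finite x)
      rw [Set.ncard_coe_finset] at h5
      have h6 := horder x
      omega
    have hTQ : T ⊆ ⋃ S, P S := by
      intro x hx
      have hx' : n + 2 ≤ (σ x).ncard := hx
      rw [Set.ncard_eq_toFinset_card _ (hσfin x)] at hx'
      obtain ⟨t, htsub, htcard⟩ := Finset.exists_subset_card_eq hx'
      refine mem_iUnion.2 ⟨⟨t, htcard⟩, ?_⟩
      refine mem_iInter₂.2 fun a ha => ?_
      exact hWcl a ((hσfin x).mem_toFinset.1 (htsub ha))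
    -- the shrunk lower-order family
    set G' : A → Set X := fun a => W a \ T with hG'def
    have hG'open : ∀ a, IsOpen (G' a) := fun a => (hWopen a).sdiff hT
    have hG'lf : LocallyFinite G' := hGlf.subset fun a => diff_subset.trans (hWG a)
    have hG'ord : ∀ x, {a | x ∈ G' a}.ncard ≤ n + 1 := by
      intro x
      by_cases hxT : x ∈ T
      · have hemp : {a | x ∈ G' a} = ∅ := eq_empty_of_forall_notMem fun a ha => ha.2 hxT
        simp [hemp]
      · have hsub3 : {a | x ∈ G' a} ⊆ σ x := fun a ha => subset_closure ha.1
        have h6 := Set.ncard_le_ncard hsub3 (hσfin x)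
        have h7 : ¬ n + 2 ≤ (σ x).ncard := hxT
        omega
    have hs' : IsClosed (s \ ⋃ S, P S) := hs.sdiff (isOpen_iUnion hPopen)
    have hs'sub : s \ (⋃ S, P S) ⊆ ⋃ a, G' a := by
      intro x hx
      obtain ⟨a, ha⟩ := mem_iUnion.1 (hsW hx.1)
      exact mem_iUnion.2 ⟨a, ha, fun hxT => hx.2 (hTQ hxT)⟩
    obtain ⟨O', hO'open, hO'cover, hO'ref, hO'disj⟩ :=
      IH A hA G' hG'open hG'lf hG'ord _ hs' hs'sub
    obtain ⟨e2⟩ := nonempty_embedding_nat {S : Finset A // S.card = n + 2}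
    set Otop : ℕ → Set X :=
      fun k => ⋃ S : {S : {S : Finset A // S.card = n + 2} // e2 S = k}, P S.1 with hOtopdef
    refine ⟨Fin.lastCases Otop O', ?_, ?_, ?_, ?_⟩
    · intro i
      induction i using Fin.lastCases with
      | last =>
        simp only [Fin.lastCases_last]
        exact fun k => isOpen_iUnion fun S => hPopen S.1
      | cast j =>
        simp only [Fin.lastCases_castSucc]
        exact hO'open j
    · intro x hx
      by_cases hxQ : x ∈ ⋃ S, P S
      · obtain ⟨S, hS⟩ := mem_iUnion.1 hxQ
        refine mem_iUnion.2 ⟨Fin.last (n + 1), mem_iUnion.2 ⟨e2 S, ?_⟩⟩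
        simp only [Fin.lastCases_last]
        exact mem_iUnion.2 ⟨⟨S, rfl⟩, hS⟩
      · obtain ⟨i, hi⟩ := mem_iUnion.1 (hO'cover ⟨hx, hxQ⟩)
        obtain ⟨k, hk⟩ := mem_iUnion.1 hi
        refine mem_iUnion.2 ⟨i.castSucc, mem_iUnion.2 ⟨k, ?_⟩⟩
        simp only [Fin.lastCases_castSucc]
        exact hk
    · intro i k
      induction i using Fin.lastCases with
      | last =>
        simp only [Fin.lastCases_last]
        by_cases h : ∃ S : {S : Finset A // S.card = n + 2}, e2 S = k
        · obtain ⟨S0, hS0⟩ := h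
          obtain ⟨a0, ha0⟩ := Finset.card_pos.mp (by rw [S0.2]; omega)
          refine Or.inr ⟨a0, fun x hx => ?_⟩
          obtain ⟨⟨S, hSk⟩, hxS⟩ := mem_iUnion.1 hx
          obtain rfl : S = S0 := e2.injective (hSk.trans hS0.symm)
          exact hPsubG S a0 ha0 hxS
        · refine Or.inl (eq_empty_of_forall_notMem fun x hx => ?_)
          obtain ⟨⟨S, hSk⟩, _⟩ := mem_iUnion.1 hx
          exact h ⟨S, hSk⟩
      | cast j =>
        simp only [Fin.lastCases_castSucc]
        refine (hO'ref j k).imp id ?_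
        rintro ⟨a, ha⟩
        exact ⟨a, ha.trans (diff_subset.trans (hWG a))⟩
    · intro i k k' hkk'
      induction i using Fin.lastCases with
      | last =>
        simp only [Fin.lastCases_last]
        refine eq_empty_of_forall_notMem fun x hx => ?_
        obtain ⟨⟨S, hSk⟩, hxS⟩ := mem_iUnion.1 hx.1
        obtain ⟨⟨S', hS'k⟩, hxS'⟩ := mem_iUnion.1 hx.2
        have hne : S ≠ S' := fun h => hkk' (by rw [← hSk, ← hS'k, h])
        have hPSS := hPdisj S S' hne
        have hxx : x ∈ P S ∩ P S' := ⟨hxS, hxS'⟩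
        rw [hPSS] at hxx
        exact hxx
      | cast j =>
        simp only [Fin.lastCases_castSucc]
        exact hO'disj j k k' hkk'

/-- Let `X` be a paracompact Hausdorff space of covering dimension at most `n` and let
`{U_α}_{α ∈ A}` be an open cover of `X` with `A` countable.  Then there is an open cover
`{O_{iβ} : i ∈ {0, …, n}, β ∈ B_i}` of `X` refining `{U_α}` such that each index set `B_i`
is countable and, for each fixed `i`, the sets `O_{iβ}`, `β ∈ B_i`, are pairwise disjoint. -/
theorem subanalytic_triangulation_stmt1
    (X : Type) [TopologicalSpace X] [T2Space X] [ParacompactSpace X]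
    (n : ℕ) (hdim : CovDimLE X n)
    (A : Type) [Countable A] (U : A → Set X) (hUopen : ∀ a, IsOpen (U a))
    (hUcover : (⋃ a, U a) = Set.univ) :
    ∃ (B : Fin (n + 1) → Type) (O : ∀ i, B i → Set X),
      (∀ i, Countable (B i)) ∧
      (∀ i β, IsOpen (O i β)) ∧
      (⋃ i, ⋃ β, O i β) = Set.univ ∧
      (∀ i β, ∃ a, O i β ⊆ U a) ∧
      (∀ i, ∀ β β' : B i, β ≠ β' → O i β ∩ O i β' = ∅) := by
  classical
  obtain ⟨κ, V, hVopen, hVcover, hVref, hVord⟩ := hdim A U hUopen hUcover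
  obtain ⟨v, hvopen, hvcover, hvlf, hvV⟩ := precise_refinement V hVopen hVcover
  choose f hf using hVref
  set G : A → Set X := fun a => ⋃ j : {j : κ // f j = a}, v j.1 with hGdef
  have hGopen : ∀ a, IsOpen (G a) := fun a => isOpen_iUnion fun j => hvopen j.1
  have hGsubU : ∀ a, G a ⊆ U a := by
    intro a x hx
    obtain ⟨⟨j, hj⟩, hxj⟩ := mem_iUnion.1 hx
    exact hj ▸ hf j (hvV j hxj)
  have hGcover : Set.univ ⊆ ⋃ a, G a := by
    intro x _
    have hx : x ∈ ⋃ j, v j := hvcover ▸ mem_univ x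
    obtain ⟨j, hj⟩ := mem_iUnion.1 hx
    exact mem_iUnion.2 ⟨f j, mem_iUnion.2 ⟨⟨j, rfl⟩, hj⟩⟩
  have hGlf : LocallyFinite G := by
    intro x
    obtain ⟨N, hN, hNfin⟩ := hvlf x
    refine ⟨N, hN, ?_⟩
    have hsub : {a | (G a ∩ N).Nonempty} ⊆ f '' {j | (v j ∩ N).Nonempty} := by
      rintro a ⟨y, hy⟩
      obtain ⟨⟨j, hj⟩, hyj⟩ := mem_iUnion.1 hy.1
      exact ⟨j, ⟨y, hyj, hy.2⟩, hj⟩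
    exact (hNfin.image f).subset hsub
  have hGord : ∀ x, {a | x ∈ G a}.ncard ≤ n + 1 := by
    intro x
    rcases Set.eq_empty_or_nonempty {a | x ∈ G a} with h | ⟨a0, ha0⟩
    · simp [h]
    · haveI : Nonempty κ := ⟨(mem_iUnion.1 ha0).choose.1⟩
      set g : A → κ := fun a =>
        if h : x ∈ G a then ((mem_iUnion.1 h).choose : {j // f j = a}).1
        else Classical.arbitrary κ with hgdef
      refine le_trans (Set.ncard_le_ncard_of_injOn g ?_ ?_ (hVord x).1) (hVord x).2
      · intro a ha
        have h : x ∈ G a := ha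
        have hspec := (mem_iUnion.1 h).choose_spec
        have : g a = ((mem_iUnion.1 h).choose : {j // f j = a}).1 := by
          simp only [hgdef, dif_pos h]
        rw [this]
        exact hvV _ hspec
      · intro a ha a' ha' hgg
        have h : x ∈ G a := ha
        have h' : x ∈ G a' := ha'
        have e1 : f (g a) = a := by
          have : g a = ((mem_iUnion.1 h).choose : {j // f j = a}).1 := by
            simp only [hgdef, dif_pos h]
          rw [this]; exact ((mem_iUnion.1 h).choose).2
        have e2 : f (g a') = a' := by
          have : g a' = ((mem_iUnion.1 h').choose : {j // f j = a'}).1 := by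
            simp only [hgdef, dif_pos h']
          rw [this]; exact ((mem_iUnion.1 h').choose).2
        rw [← e1, ← e2, hgg]
  obtain ⟨O, hOopen, hOcover, hOref, hOdisj⟩ :=
    covdim_decomp_key n A inferInstance G hGopen hGlf hGord Set.univ isClosed_univ hGcover
  refine ⟨fun i => {k : ℕ // (O i k).Nonempty}, fun i β => O i β.1,
    fun i => inferInstance, fun i β => hOopen i β.1, ?_, ?_, ?_⟩
  · apply Set.eq_univ_of_univ_subset
    intro x hx
    obtain ⟨i, hi⟩ := mem_iUnion.1 (hOcover hx)
    obtain ⟨k, hk⟩ := mem_iUnion.1 hi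
    exact mem_iUnion.2 ⟨i, mem_iUnion.2 ⟨⟨k, ⟨x, hk⟩⟩, hk⟩⟩
  · intro i β
    rcases hOref i β.1 with h | ⟨a, ha⟩
    · exact absurd h β.2.ne_empty
    · exact ⟨a, ha.trans (hGsubU a)⟩
  · intro i β β' hne
    exact hOdisj i β.1 β'.1 fun h => hne (Subtype.ext h)
end

section
/- Let X be a Hausdorff topological space, let k ≥ 1 be an integer, and for each j ∈ {1,…,k} let U_j ⊆ W_j be open subsets of X such that the sets U_1,…,U_k cover X. Suppose that for each j there are: a continuous function h_j : X → [0,1] with h_j identically equal to 1 on U_j and identically equal to 0 on X ∖ W_j; and a continuous map f_{0j} : X → ℝ^m whose restriction to W_j is a topological embedding (a homeomorphism onto its image with the subspace topology). Then the map f₀ : X → ℝ^{k(m+1)} defined by f₀(x) = (h_1(x),…,h_k(x), f_{01}(x),…,f_{0k}(x)) is a topological embedding. -/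
/-- Let `X` be a Hausdorff space, `k ≥ 1`, and for `j ∈ {1, …, k}` let `U_j ⊆ W_j` be open
subsets of `X` with the `U_j` covering `X`.  Suppose for each `j` there is a continuous
`h_j : X → [0,1]` which is identically `1` on `U_j` and identically `0` off `W_j`, and a
continuous `f_{0j} : X → ℝ^m` whose restriction to `W_j` is a topological embedding.  Then
`f₀ = (h_1, …, h_k, f_{01}, …, f_{0k}) : X → ℝ^{k(m+1)}` is a topological embedding. -/
theorem subanalytic_triangulation_stmt4
    {X : Type*} [TopologicalSpace X] [T2Space X] (k m : ℕ) (hk : 1 ≤ k)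
    (U W : Fin k → Set X)
    (hUopen : ∀ j, IsOpen (U j)) (hWopen : ∀ j, IsOpen (W j))
    (hUW : ∀ j, U j ⊆ W j) (hUcover : (⋃ j, U j) = Set.univ)
    (h : Fin k → X → ℝ) (hhcont : ∀ j, Continuous (h j))
    (hh01 : ∀ j x, h j x ∈ Set.Icc (0 : ℝ) 1)
    (hhone : ∀ j, ∀ x ∈ U j, h j x = 1)
    (hhzero : ∀ j, ∀ x ∉ W j, h j x = 0)
    (f : Fin k → X → EuclideanSpace ℝ (Fin m)) (hfcont : ∀ j, Continuous (f j))
    (hfemb : ∀ j, Topology.IsEmbedding (fun x : (W j : Set X) => f j (x : X))) :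
    Topology.IsEmbedding
      (fun x : X => ((fun j => h j x, fun j => f j x) :
        (Fin k → ℝ) × (Fin k → EuclideanSpace ℝ (Fin m)))) := by
  set F : X → (Fin k → ℝ) × (Fin k → EuclideanSpace ℝ (Fin m)) :=
    fun x => (fun j => h j x, fun j => f j x) with hF
  have hmemW : ∀ j y, h j y ≠ 0 → y ∈ W j := by
    intro j y hy
    by_contra hyW
    exact hy (hhzero j y hyW)
  have hFcont : Continuous F := by
    refine Continuous.prodMk ?_ ?_
    · exact continuous_pi fun j => hhcont j
    · exact continuous_pi fun j => hfcont j
  have hinj : Function.Injective F := by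
    intro x y hxy
    obtain ⟨j, hxU⟩ : ∃ j, x ∈ U j := by
      have : x ∈ ⋃ j, U j := hUcover ▸ Set.mem_univ x
      exact Set.mem_iUnion.mp this
    have h1 : h j x = 1 := hhone j x hxU
    have hhy : h j y = 1 := by
      have := congrArg (fun p => p.1 j) hxy
      simpa [hF, h1] using this.symm
    have hyW : y ∈ W j := hmemW j y (by rw [hhy]; norm_num)
    have hxW : x ∈ W j := hUW j hxU
    have hfxy : f j x = f j y := congrArg (fun p => p.2 j) hxy
    have := (hfemb j).injective (a₁ := ⟨x, hxW⟩) (a₂ := ⟨y, hyW⟩) hfxy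
    exact Subtype.ext_iff.mp this
  refine ⟨?_, hinj⟩
  rw [Topology.isInducing_iff_nhds]
  intro x
  refine le_antisymm (hFcont.continuousAt (x := x)).le_comap ?_
  intro V hV
  obtain ⟨j, hxU⟩ : ∃ j, x ∈ U j := by
    have : x ∈ ⋃ j, U j := hUcover ▸ Set.mem_univ x
    exact Set.mem_iUnion.mp this
  obtain ⟨V', hV'sub, hV'open, hxV'⟩ := mem_nhds_iff.mp hV
  set V'' : Set X := V' ∩ W j with hV''
  have hxW : x ∈ W j := hUW j hxU
  have hxV'' : x ∈ V'' := ⟨hxV', hxW⟩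
  have hV''open : IsOpen V'' := hV'open.inter (hWopen j)
  -- in the subtype W j, the set V'' pulls back to an open set
  have hsubOpen : IsOpen (Subtype.val ⁻¹' V'' : Set (W j : Set X)) :=
    hV''open.preimage continuous_subtype_val
  obtain ⟨O, hOopen, hOeq⟩ := (hfemb j).isInducing.isOpen_iff.mp hsubOpen
  rw [Filter.mem_comap]
  refine ⟨{p | p.1 j ≠ 0} ∩ {p | p.2 j ∈ O}, ?_, ?_⟩
  · have hopen : IsOpen ({p : (Fin k → ℝ) × (Fin k → EuclideanSpace ℝ (Fin m)) |
        p.1 j ≠ 0} ∩ {p | p.2 j ∈ O}) := by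
      have hc1 : Continuous fun p : (Fin k → ℝ) × (Fin k → EuclideanSpace ℝ (Fin m)) =>
          p.1 j := (continuous_apply j).comp continuous_fst
      have hc2 : Continuous fun p : (Fin k → ℝ) × (Fin k → EuclideanSpace ℝ (Fin m)) =>
          p.2 j := (continuous_apply j).comp continuous_snd
      exact ((isOpen_ne (X := ℝ)).preimage hc1).inter (hOopen.preimage hc2)
    refine hopen.mem_nhds ⟨?_, ?_⟩
    · show h j x ≠ 0
      rw [hhone j x hxU]; norm_num
    · show f j x ∈ O
      have : (⟨x, hxW⟩ : (W j : Set X)) ∈ (fun y : (W j : Set X) => f j (y : X)) ⁻¹' O := by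
        rw [hOeq]; exact hxV''
      exact this
  · intro y hy
    have hy1 : h j y ≠ 0 := hy.1
    have hyW : y ∈ W j := hmemW j y hy1
    have hyO : f j y ∈ O := hy.2
    have : (⟨y, hyW⟩ : (W j : Set X)) ∈ (fun z : (W j : Set X) => f j (z : X)) ⁻¹' O := hyO
    rw [hOeq] at this
    exact hV'sub this.1
end

section
/- Let X be a Hausdorff topological space, let f₀ : X → ℝ^q be a topological embedding, and let (λ_i)_{i=1}^∞ be a family of continuous functions λ_i : X → [0,∞) whose supports form a locally finite family of compact subsets of X and which satisfy Σ_{i=1}^∞ λ_i(x) = 1 for every x ∈ X. Define λ : X → ℝ by λ(x) = Σ_{i=1}^∞ 2^{-i} λ_i(x), and define f : X → ℝ^{q+1} by f(x) = (f₀(x), 1)/λ(x). Then 0 < λ(x) < 1 for every x ∈ X, the map f is a topological embedding, the image f(X) is a closed subset of ℝ^{q+1}, and consequently f is a proper map. -/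
/-!
Off the compact set `⋃_{i < N} supp λᵢ` the sum `λ = ∑ 2^{-(i+1)} λᵢ` is at most `2^{-(N+1)}`,
so every superlevel set `{ε ≤ λ}` is compact. The last coordinate of `f = (f₀, 1) / λ` is `1 / λ`,
so the preimage under `f` of a bounded set lies in such a superlevel set: `f` is proper, hence
closed, and being injective it is a closed embedding.
-/

open Function

section GeometricWeights

variable {a : ℕ → ℝ} {r : ℝ}

lemma summable_of_tsum_eq_one (h : ∑' i, a i = 1) : Summable a := by
  by_contra hs
  simp [tsum_eq_zero_of_not_summable hs] at h

lemma norm_le_one_of_tsum_eq_one (ha : ∀ i, 0 ≤ a i) (h : ∑' i, a i = 1) (i : ℕ) : ‖a i‖ ≤ 1 :=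
  (Real.norm_of_nonneg (ha i)).trans_le <|
    h ▸ (summable_of_tsum_eq_one h).le_tsum i fun j _ => ha j

lemma summable_pow_succ_mul (hr₀ : 0 ≤ r) (hr₁ : r ≤ 1) (ha : ∀ i, 0 ≤ a i)
    (h : ∑' i, a i = 1) : Summable fun i => r ^ (i + 1) * a i :=
  (summable_of_tsum_eq_one h).of_nonneg_of_le (fun i => mul_nonneg (by positivity) (ha i))
    fun i => mul_le_of_le_one_left (ha i) (pow_le_one₀ hr₀ hr₁)

lemma tsum_pow_succ_mul_pos (hr₀ : 0 < r) (hr₁ : r ≤ 1) (ha : ∀ i, 0 ≤ a i)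
    (h : ∑' i, a i = 1) : 0 < ∑' i, r ^ (i + 1) * a i := by
  obtain ⟨i, hi⟩ : ∃ i, 0 < a i := by
    by_contra! hle
    simp [fun i => le_antisymm (hle i) (ha i)] at h
  exact (summable_pow_succ_mul hr₀.le hr₁ ha h).tsum_pos
    (fun j => mul_nonneg (by positivity) (ha j)) i (by positivity)

lemma tsum_pow_succ_mul_le_of_eq_zero (hr₀ : 0 ≤ r) (hr₁ : r ≤ 1) (ha : ∀ i, 0 ≤ a i)
    (h : ∑' i, a i = 1) {N : ℕ} (hN : ∀ i < N, a i = 0) :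
    ∑' i, r ^ (i + 1) * a i ≤ r ^ (N + 1) :=
  calc ∑' i, r ^ (i + 1) * a i ≤ ∑' i, r ^ (N + 1) * a i := by
        refine (summable_pow_succ_mul hr₀ hr₁ ha h).tsum_le_tsum (fun i => ?_)
          ((summable_of_tsum_eq_one h).mul_left _)
        rcases lt_or_ge i N with hi | hi
        · simp [hN i hi]
        · exact mul_le_mul_of_nonneg_right (pow_le_pow_of_le_one hr₀ hr₁ (by omega)) (ha i)
    _ = r ^ (N + 1) := by rw [tsum_mul_left, h, mul_one]

lemma tsum_pow_succ_mul_le (hr₀ : 0 ≤ r) (hr₁ : r ≤ 1) (ha : ∀ i, 0 ≤ a i)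
    (h : ∑' i, a i = 1) : ∑' i, r ^ (i + 1) * a i ≤ r := by
  simpa using tsum_pow_succ_mul_le_of_eq_zero hr₀ hr₁ ha h (N := 0) (by simp)

end GeometricWeights

section PartitionOfUnity

variable {X : Type*} [TopologicalSpace X] {lam : ℕ → X → ℝ} {r : ℝ}

lemma continuous_tsum_pow_succ_mul (hr₀ : 0 ≤ r) (hr₁ : r < 1) (hcont : ∀ i, Continuous (lam i))
    (hbound : ∀ i x, ‖lam i x‖ ≤ 1) : Continuous fun x => ∑' i, r ^ (i + 1) * lam i x :=
  continuous_tsum (fun i => continuous_const.mul (hcont i))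
    ((summable_nat_add_iff 1).mpr (summable_geometric_of_lt_one hr₀ hr₁)) fun i x => by
      rw [norm_mul, norm_pow, Real.norm_of_nonneg hr₀]
      exact mul_le_of_le_one_right (by positivity) (hbound i x)

lemma isCompact_setOf_le_tsum_pow_succ_mul (hr₀ : 0 ≤ r) (hr₁ : r < 1)
    (hcont : ∀ i, Continuous (lam i)) (hnonneg : ∀ i x, 0 ≤ lam i x)
    (hcompact : ∀ i, IsCompact (tsupport (lam i))) (hsum : ∀ x, ∑' i, lam i x = 1)
    {ε : ℝ} (hε : 0 < ε) : IsCompact {x | ε ≤ ∑' i, r ^ (i + 1) * lam i x} := by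
  obtain ⟨N, hN⟩ := exists_pow_lt_of_lt_one hε hr₁
  refine (Finset.range N).isCompact_biUnion (fun i _ => hcompact i) |>.of_isClosed_subset
    (isClosed_le continuous_const (continuous_tsum_pow_succ_mul hr₀ hr₁ hcont
      fun i x => norm_le_one_of_tsum_eq_one (hnonneg · x) (hsum x) i)) ?_
  intro x (hx : ε ≤ _)
  by_contra hxK
  have hvanish : ∀ i < N, lam i x = 0 := fun i hi =>
    image_eq_zero_of_notMem_tsupport fun hi' =>
      hxK (Set.mem_biUnion (Finset.mem_range.mpr hi) hi')
  have hsmall := tsum_pow_succ_mul_le_of_eq_zero hr₀ hr₁.le (hnonneg · x) (hsum x) hvanish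
  have := pow_le_pow_of_le_one hr₀ hr₁.le (N.le_add_right 1)
  linarith

end PartitionOfUnity

section ProjectiveCone

variable {X : Type*} {q : ℕ} {f₀ : X → (Fin q → ℝ)} {s : X → ℝ}

lemma injective_inv_smul_snoc (hf₀ : Injective f₀) (hs : ∀ x, s x ≠ 0) :
    Injective fun x => (s x)⁻¹ • (Fin.snoc (f₀ x) 1 : Fin (q + 1) → ℝ) := by
  intro x y hxy
  have hlast : s x = s y := by simpa using congr_fun hxy (Fin.last q)
  refine hf₀ (funext fun i => ?_)
  simpa [hlast, hs y] using congr_fun hxy i.castSucc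

variable [TopologicalSpace X]

lemma isProperMap_inv_smul_snoc (hf₀ : Continuous f₀) (hs : Continuous s) (hpos : ∀ x, 0 < s x)
    (hcpt : ∀ ε > 0, IsCompact {x | ε ≤ s x}) :
    IsProperMap fun x => (s x)⁻¹ • (Fin.snoc (f₀ x) 1 : Fin (q + 1) → ℝ) := by
  have hcont : Continuous fun x => (s x)⁻¹ • (Fin.snoc (f₀ x) 1 : Fin (q + 1) → ℝ) :=
    (hs.inv₀ fun x => (hpos x).ne').smul (hf₀.finSnoc continuous_const)
  refine isProperMap_iff_isCompact_preimage.mpr ⟨hcont, fun C hC => ?_⟩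
  obtain ⟨R, hR, hCR⟩ := hC.isBounded.exists_pos_norm_le
  refine (hcpt R⁻¹ (inv_pos.mpr hR)).of_isClosed_subset (hC.isClosed.preimage hcont)
    fun x hx => ?_
  have hlast := (norm_le_pi_norm _ (Fin.last q)).trans (hCR _ hx)
  simp only [Pi.smul_apply, Fin.snoc_last, smul_eq_mul, mul_one, norm_inv,
    Real.norm_of_nonneg (hpos x).le] at hlast
  exact (inv_le_comm₀ (hpos x) hR).mp hlast

end ProjectiveCone

theorem subanalytic_triangulation_stmt5_general
    {X : Type*} [TopologicalSpace X] (q : ℕ)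
    (f₀ : X → (Fin q → ℝ)) (hf₀ : Topology.IsEmbedding f₀)
    (lam : ℕ → X → ℝ)
    (hcont : ∀ i, Continuous (lam i))
    (hnonneg : ∀ i x, 0 ≤ lam i x)
    (hcompact : ∀ i, IsCompact (tsupport (lam i)))
    (hsum : ∀ x, ∑' i : ℕ, lam i x = 1)
    (lamS : X → ℝ) (hlamS : ∀ x, lamS x = ∑' i : ℕ, (2 : ℝ)⁻¹ ^ (i + 1) * lam i x)
    (f : X → (Fin (q + 1) → ℝ)) (hf : ∀ x, f x = (lamS x)⁻¹ • (Fin.snoc (f₀ x) 1 : Fin (q + 1) → ℝ)) :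
    (∀ x, 0 < lamS x ∧ lamS x < 1) ∧
    Topology.IsEmbedding f ∧
    IsClosed (Set.range f) ∧
    IsProperMap f := by
  obtain rfl : lamS = _ := funext hlamS
  obtain rfl : f = _ := funext hf
  have hpos : ∀ x, 0 < ∑' i, (2 : ℝ)⁻¹ ^ (i + 1) * lam i x := fun x =>
    tsum_pow_succ_mul_pos (by norm_num) (by norm_num) (hnonneg · x) (hsum x)
  have hproper := isProperMap_inv_smul_snoc hf₀.continuous
    (continuous_tsum_pow_succ_mul (by norm_num) (by norm_num) hcont
      fun i x => norm_le_one_of_tsum_eq_one (hnonneg · x) (hsum x) i)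
    hpos fun _ hε => isCompact_setOf_le_tsum_pow_succ_mul (by norm_num) (by norm_num)
      hcont hnonneg hcompact hsum hε
  have hemb := Topology.IsClosedEmbedding.of_continuous_injective_isClosedMap hproper.continuous
    (injective_inv_smul_snoc hf₀.injective fun x => (hpos x).ne') hproper.isClosedMap
  refine ⟨fun x => ⟨hpos x, ?_⟩, hemb.isEmbedding, hemb.isClosed_range, hproper⟩
  exact (tsum_pow_succ_mul_le (by norm_num) (by norm_num) (hnonneg · x) (hsum x)).trans_lt
    (by norm_num)

/-- Let `X` be a Hausdorff space, `f₀ : X → ℝ^q` a topological embedding, and `(λ_i)_{i=1}^∞`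
a family of continuous nonnegative functions whose supports form a locally finite family of
compact subsets of `X` and with `Σ_i λ_i(x) = 1` for every `x`.  Let
`λ(x) = Σ_{i=1}^∞ 2^{-i} λ_i(x)` and `f(x) = (f₀(x), 1) / λ(x) ∈ ℝ^{q+1}`.  Then
`0 < λ(x) < 1` for all `x`, the map `f` is a topological embedding, its image `f(X)` is
closed in `ℝ^{q+1}`, and consequently `f` is proper. -/
theorem subanalytic_triangulation_stmt5
    {X : Type*} [TopologicalSpace X] [T2Space X] (q : ℕ)
    (f₀ : X → (Fin q → ℝ)) (hf₀ : Topology.IsEmbedding f₀)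
    (lam : ℕ → X → ℝ)
    (hcont : ∀ i, Continuous (lam i))
    (hnonneg : ∀ i x, 0 ≤ lam i x)
    (hcompact : ∀ i, IsCompact (tsupport (lam i)))
    (hlocfin : LocallyFinite fun i => tsupport (lam i))
    (hsum : ∀ x, ∑' i : ℕ, lam i x = 1)
    (lamS : X → ℝ) (hlamS : ∀ x, lamS x = ∑' i : ℕ, (2 : ℝ)⁻¹ ^ (i + 1) * lam i x)
    (f : X → (Fin (q + 1) → ℝ)) (hf : ∀ x, f x = (lamS x)⁻¹ • (Fin.snoc (f₀ x) 1 : Fin (q + 1) → ℝ)) :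
    (∀ x, 0 < lamS x ∧ lamS x < 1) ∧
    Topology.IsEmbedding f ∧
    IsClosed (Set.range f) ∧
    IsProperMap f :=
  subanalytic_triangulation_stmt5_general q f₀ hf₀ lam hcont hnonneg hcompact hsum lamS hlamS f hf
end
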